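/- arXiv:2510.16330 — 2 statements merged into one kernel-verified Lean document; each statement's English description precedes it below -/
import Mathlib

section
/- Let G and H be hypergraphs. Then: (i) |V(G ⊗ H)| = |V(G)| · |V(H)|; (ii) |E(G ⊗ H)| ≤ 2^{r(G)·|V(H)|} · |E(G)|; (iii) for every l ∈ ℕ ∪ {∞}, if there is a linear ordering of V(G) under which every vertex of G has l-outdegree at most d, then there is a linear ordering of V(G ⊗ H) under which every vertex of G ⊗ H has l-outdegree at most |V(H)| · (d + 1). -/
open scoped Classical

noncomputable section

/-- A hypergraph: a finite vertex set and a finite set of hyperedges, with vertices in `ℕ`. -/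
structure NatHypergraph where
  verts : Finset ℕ
  edges : Finset (Finset ℕ)

namespace NatHypergraph

/-- Well-formedness: every hyperedge is a nonempty subset of the vertex set. -/
def Good (G : NatHypergraph) : Prop := ∀ e ∈ G.edges, e ⊆ G.verts ∧ e.Nonempty

/-- The rank of a hypergraph: the maximum arity of a hyperedge. -/
def rank (G : NatHypergraph) : ℕ := G.edges.sup Finset.card

/-- The induced `l`-trimmed subhypergraph of `G` on `S`. -/
def trim (G : NatHypergraph) (S : Finset ℕ) (l : ℕ∞) : NatHypergraph :=
  ⟨G.verts ∩ S,
    (G.edges.filter fun e => ((e \ S).card : ℕ∞) ≤ l ∧ (e ∩ S).Nonempty).image fun e => e ∩ S⟩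

/-- The degree of a vertex: the number of hyperedges containing it. -/
def degree (G : NatHypergraph) (v : ℕ) : ℕ := (G.edges.filter fun e => v ∈ e).card

/-- The `l`-degeneracy of a hypergraph: the least `κ` such that every nonempty induced
`l`-trimmed subhypergraph has a vertex of degree at most `κ`. -/
def degeneracy (G : NatHypergraph) (l : ℕ∞) : ℕ :=
  sInf {κ : ℕ | ∀ S ⊆ G.verts, S.Nonempty → ∃ v ∈ S, (G.trim S l).degree v ≤ κ}

/-- Two vertices are adjacent if some hyperedge contains both. -/
def Adj (G : NatHypergraph) (u v : ℕ) : Prop := ∃ e ∈ G.edges, u ∈ e ∧ v ∈ e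

/-- A hypergraph is connected if any two vertices are joined by a path of adjacencies. -/
def Connected (G : NatHypergraph) : Prop :=
  ∀ u ∈ G.verts, ∀ v ∈ G.verts, Relation.ReflTransGen G.Adj u v

/-- `D` is a connected component of `G`. -/
def IsComponent (G : NatHypergraph) (D : Finset ℕ) : Prop :=
  ∃ v ∈ G.verts, D = G.verts.filter fun u => Relation.ReflTransGen G.Adj v u

/-- The induced subhypergraph (only hyperedges entirely inside `S`). -/
def induce (G : NatHypergraph) (S : Finset ℕ) : NatHypergraph :=
  ⟨G.verts ∩ S, G.edges.filter fun e => e ⊆ S⟩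

end NatHypergraph

/-- `f` is a homomorphism from `H` to `G`. -/
def IsHom (H G : NatHypergraph) (f : ℕ → ℕ) : Prop :=
  (∀ v ∈ H.verts, f v ∈ G.verts) ∧ ∀ e ∈ H.edges, e.image f ∈ G.edges

/-- `Hom(G,H)`: the number of homomorphisms from `H` to `G`
(normalized to be `0` off `V(H)` so that the set is finite). -/
def homCount (G H : NatHypergraph) : ℕ :=
  Set.ncard {f : ℕ → ℕ | IsHom H G f ∧ ∀ v ∉ H.verts, f v = 0}

/-- `Homr(G,H)`: the number of arity-preserving homomorphisms from `H` to `G`. -/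
def homrCount (G H : NatHypergraph) : ℕ :=
  Set.ncard {f : ℕ → ℕ | IsHom H G f ∧ (∀ e ∈ H.edges, (e.image f).card = e.card) ∧
    ∀ v ∉ H.verts, f v = 0}

/-- NatHypergraph isomorphism. -/
def Isomorphic (H H' : NatHypergraph) : Prop :=
  ∃ f : ℕ → ℕ, Set.BijOn f ↑H.verts ↑H'.verts ∧
    H'.edges = H.edges.image fun e => e.image f

/-- The quotient of `H` under the partition of `V(H)` into the fibers of `f`. -/
def quotientBy (H : NatHypergraph) (f : ℕ → ℕ) : NatHypergraph :=
  ⟨H.verts.image f, H.edges.image fun e => e.image f⟩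

/-- `H'` is a quotient of `H` (by some partition of `V(H)`). -/
def IsQuotient (H H' : NatHypergraph) : Prop := ∃ f : ℕ → ℕ, H' = quotientBy H f

/-- Each fiber of `f` induces a connected (trimmed) subhypergraph of `H`. -/
def ContractMap (H : NatHypergraph) (f : ℕ → ℕ) : Prop :=
  ∀ w : ℕ, (H.trim (H.verts.filter fun v => f v = w) ⊤).Connected

/-- `H'` belongs to the contract set `Q^c(H)`: it is a quotient of `H` by a partition
all of whose parts induce connected subhypergraphs of `H`. -/
def IsContractQuotient (H H' : NatHypergraph) : Prop :=
  ∃ f : ℕ → ℕ, ContractMap H f ∧ H' = quotientBy H f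

/-- `α(H')`: the number of partitions `τ` of `V(H)` with connected parts with `H/τ ≅ H'`. -/
def alphaCount (H H' : NatHypergraph) : ℕ :=
  Set.ncard {P : Finset (Finset ℕ) | ∃ f : ℕ → ℕ, ContractMap H f ∧
    Isomorphic (quotientBy H f) H' ∧
    P = (H.verts.image f).image fun w => H.verts.filter fun v => f v = w}

/-- `|Aut(H')|`: the number of automorphisms of `H'`. -/
def autCount (H' : NatHypergraph) : ℕ :=
  Set.ncard {f : ℕ → ℕ | (∀ v ∉ H'.verts, f v = v) ∧ Set.BijOn f ↑H'.verts ↑H'.verts ∧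
    H'.edges.image (fun e => e.image f) = H'.edges}

/-- The arc relation of the `l`-skeleton of the DAH obtained by ordering `G` by `π`. -/
def SkelArc (G : NatHypergraph) (π : ℕ → ℕ) (l : ℕ∞) (u v : ℕ) : Prop :=
  ∃ e ∈ G.edges, u ∈ e ∧ v ∈ e ∧ π u < π v ∧
    ((e.filter fun w => π w < π u).card : ℕ∞) ≤ l

/-- The `l`-outdegree of a vertex in the DAH `(G, π)`. -/
def loutdeg (G : NatHypergraph) (π : ℕ → ℕ) (l : ℕ∞) (u : ℕ) : ℕ :=
  (G.verts.filter fun v => SkelArc G π l u v).card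

/-- Vertices reachable from `v` by a directed path. -/
def Reach (Adj : ℕ → ℕ → Prop) (v : ℕ) : Set ℕ := {u | Relation.ReflTransGen Adj v u}

/-- Vertices reachable from a set `A`. -/
def ReachSet (Adj : ℕ → ℕ → Prop) (A : Set ℕ) : Set ℕ :=
  {u | ∃ a ∈ A, Relation.ReflTransGen Adj a u}

/-- The sources of a DAG: vertices with no incoming arc. -/
def sourcesOf (V : Finset ℕ) (Adj : ℕ → ℕ → Prop) : Finset ℕ :=
  V.filter fun v => ¬ ∃ u ∈ V, Adj u v

/-- `b` lies on the (unique) path between `i` and `j` in `T`. -/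
def OnPath {n : ℕ} (T : SimpleGraph (Fin n)) (i j b : Fin n) : Prop :=
  ∃ p : T.Walk i j, p.IsPath ∧ b ∈ p.support

/-- `(T, β)` is a DAG-tree decomposition of the DAG `(V, Adj)`. -/
def IsDTD (V : Finset ℕ) (Adj : ℕ → ℕ → Prop) {n : ℕ}
    (T : SimpleGraph (Fin n)) (β : Fin n → Finset ℕ) : Prop :=
  T.IsTree ∧ (∀ i, β i ⊆ sourcesOf V Adj) ∧ (∀ s ∈ sourcesOf V Adj, ∃ i, s ∈ β i) ∧
    ∀ i j b, OnPath T i j b →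
      ReachSet Adj ↑(β i) ∩ ReachSet Adj ↑(β j) ⊆ ReachSet Adj ↑(β b)

/-- The DAG-treewidth of the DAG `(V, Adj)`. -/
def dagTreewidth (V : Finset ℕ) (Adj : ℕ → ℕ → Prop) : ℕ :=
  sInf {w : ℕ | ∃ (n : ℕ) (T : SimpleGraph (Fin n)) (β : Fin n → Finset ℕ),
    IsDTD V Adj T β ∧ ∀ i, (β i).card ≤ w}

/-- The `l`-DAG-treewidth of the DAH `(H, π)`. -/
def ldtwOriented (H : NatHypergraph) (π : ℕ → ℕ) (l : ℕ∞) : ℕ :=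
  dagTreewidth H.verts (SkelArc H π l)

/-- The `l`-DAG-treewidth of an undirected hypergraph:
the maximum over all acyclic orientations. -/
def ldtw (H : NatHypergraph) (l : ℕ∞) : ℕ :=
  sSup {w : ℕ | ∃ π : ℕ → ℕ, Set.InjOn π ↑H.verts ∧ w = ldtwOriented H π l}

/-- `f` is a DAH homomorphism from `(K, πK)` to `(G, πG)`. -/
def IsDAHHom (K : NatHypergraph) (πK : ℕ → ℕ) (G : NatHypergraph) (πG : ℕ → ℕ)
    (f : ℕ → ℕ) : Prop :=
  (∀ v ∈ K.verts, f v ∈ G.verts) ∧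
    ∀ e ∈ K.edges, e.image f ∈ G.edges ∧
      ∀ u ∈ e, ∀ v ∈ e, πK u < πK v → πG (f u) < πG (f v)

/-- The number of DAH homomorphisms from `(K, πK)` to `(G, πG)`. -/
def dahHomCount (G : NatHypergraph) (πG : ℕ → ℕ) (K : NatHypergraph) (πK : ℕ → ℕ) : ℕ :=
  Set.ncard {f : ℕ → ℕ | IsDAHHom K πK G πG f ∧ ∀ v ∉ K.verts, f v = 0}

/-- Two orderings of `H` give isomorphic acyclic orientations. -/
def OrientIso (H : NatHypergraph) (π₁ π₂ : ℕ → ℕ) : Prop :=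
  ∃ g : ℕ → ℕ, Set.BijOn g ↑H.verts ↑H.verts ∧
    (H.edges.image fun e => e.image g) = H.edges ∧
    ∀ u ∈ H.verts, ∀ v ∈ H.verts, (π₁ u < π₁ v ↔ π₂ (g u) < π₂ (g v))

/-- The vertices of `H` that are `l`-reachable from the set `S` in the DAH `(H, π)`. -/
def reachClosure (H : NatHypergraph) (π : ℕ → ℕ) (l : ℕ∞) (S : Set ℕ) : Finset ℕ :=
  H.verts.filter fun v => v ∈ ReachSet (SkelArc H π l) S

/-- `H⃗[S]_l`: the sub-DAH induced (0-trimmed) on the vertices `l`-reachable from `S`. -/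
def subDAH (H : NatHypergraph) (π : ℕ → ℕ) (l : ℕ∞) (S : Set ℕ) : NatHypergraph :=
  H.trim (reachClosure H π l S) 0

/-- `B'` is a child of `B` in the tree `T` rooted at `root`. -/
def IsChild {n : ℕ} (T : SimpleGraph (Fin n)) (root B B' : Fin n) : Prop :=
  T.Adj B B' ∧ OnPath T root B' B

/-- `Γ(B)`: the union of the bags in the subtree of `T` rooted at `B`. -/
def GammaSet {n : ℕ} (T : SimpleGraph (Fin n)) (root : Fin n)
    (β : Fin n → Finset ℕ) (B : Fin n) : Set ℕ :=
  {s | ∃ i, OnPath T root i B ∧ s ∈ β i}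

/-- `ext(φ, K⃗, G⃗)` relative to the agreement domain `dom`: the number of DAH homomorphisms
from `(K, πK)` to `(G, πG)` that agree with `φ` on `V(K) ∩ dom`. -/
def extCount (K : NatHypergraph) (πK : ℕ → ℕ) (G : NatHypergraph) (πG : ℕ → ℕ)
    (dom : Set ℕ) (φ : ℕ → ℕ) : ℕ :=
  Set.ncard {ψ : ℕ → ℕ | IsDAHHom K πK G πG ψ ∧ (∀ v ∉ K.verts, ψ v = 0) ∧
    ∀ v ∈ (↑K.verts : Set ℕ) ∩ dom, ψ v = φ v}

/-- The hyperedges `E_i` associated to a core `C` and a component `D`. -/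
def obstructionEdges (H : NatHypergraph) (C D : Finset ℕ) : Finset (Finset ℕ) :=
  H.edges.filter fun e => e ⊆ C ∪ D ∧ 1 < e.card

/-- `H` is an `l`-obstruction (a member of `𝓗_l`). -/
def IsLObstruction (l : ℕ∞) (H : NatHypergraph) : Prop :=
  ∃ k, 3 ≤ k ∧ ∃ C ⊆ H.verts, C.card = k ∧
    (∀ e ∈ (H.trim C l).edges, e.card ≤ 1) ∧
    (∀ D : Finset ℕ, (H.trim (H.verts \ C) ⊤).IsComponent D →
      ¬ C ⊆ (obstructionEdges H C D).biUnion id) ∧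
    ∃ Dmap : ℕ → Finset ℕ, Set.InjOn Dmap ↑C ∧
      ∀ c ∈ C, (H.trim (H.verts \ C) ⊤).IsComponent (Dmap c) ∧
        C.erase c ⊆ (obstructionEdges H C (Dmap c)).biUnion id ∧
        ∀ e ∈ obstructionEdges H C (Dmap c), c ∉ e

/-- `H` is `𝓗_l` ITS free: no induced ∞-trimmed subhypergraph is an `l`-obstruction. -/
def ITSFree (l : ℕ∞) (H : NatHypergraph) : Prop :=
  ∀ S ⊆ H.verts, ¬ IsLObstruction l (H.trim S ⊤)

/-- The hypergraph `(Hv, He)` is an `l`-connector of `X ⊆ Hv`. -/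
def IsConnector (l : ℕ∞) (Hv : Finset ℕ) (He : Finset (Finset ℕ)) (X : Finset ℕ) : Prop :=
  X ⊆ Hv ∧ NatHypergraph.Connected ⟨Hv, He⟩ ∧
    (∀ e ∈ He, 2 ≤ (e ∩ X).card → l < ((e \ X).card : ℕ∞)) ∧
    ∃ V' : Finset ℕ, (NatHypergraph.trim ⟨Hv, He⟩ (Hv \ X) ⊤).IsComponent V' ∧
      ∀ xx ∈ X, ∃ v ∈ V', ∃ e ∈ He, xx ∈ e ∧ v ∈ e

/-- Witness data for membership of `H` in `𝓗_{l,k}`. -/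
def InHlkWitness (l : ℕ∞) (k : ℕ) (H : NatHypergraph)
    (x : ℕ → ℕ) (Vp : ℕ → Finset ℕ) (Ep : ℕ → Finset (Finset ℕ)) : Prop :=
  Set.InjOn x ↑(Finset.range k) ∧
  (∀ i < k, ∀ j < k, i ≠ j → Disjoint (Vp i) (Vp j)) ∧
  (∀ i < k, Disjoint (Vp i) ((Finset.range k).image x)) ∧
  H.verts = (Finset.range k).image x ∪ (Finset.range k).biUnion Vp ∧
  (∀ i < k, ∀ j < k, i ≠ j → Disjoint (Ep i) (Ep j)) ∧
  H.edges = (Finset.range k).biUnion Ep ∧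
  ∀ i < k,
    (∀ e ∈ Ep i, e ⊆ Vp i ∪ (((Finset.range k).image x).erase (x i))) ∧
    IsConnector l (Vp i ∪ (((Finset.range k).image x).erase (x i))) (Ep i)
      (((Finset.range k).image x).erase (x i))

/-- `H ∈ 𝓗_{l,k}`. -/
def InHlk (l : ℕ∞) (k : ℕ) (H : NatHypergraph) : Prop :=
  ∃ x Vp Ep, InHlkWitness l k H x Vp Ep

/-- The DAG `(V, Adj)` contains a `k`-reachable-cycle. -/
def HasReachCycle (V : Finset ℕ) (Adj : ℕ → ℕ → Prop) (k : ℕ) : Prop :=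
  ∃ x y : ZMod k → ℕ, Function.Injective x ∧ Function.Injective y ∧
    (∀ i, x i ∈ V) ∧ (∀ i, y i ∈ V) ∧
    (∀ i, x i ∈ Reach Adj (y i) ∧ x (i + 1) ∈ Reach Adj (y i)) ∧
    ∀ v ∈ V, 2 ≤ (Set.range x ∩ Reach Adj v).ncard →
      ∃ i, Set.range x ∩ Reach Adj v = {x i, x (i + 1)}

/-- `(x, y)` form a `k`-reachable-simplex in the DAG `(V, Adj)`. -/
def IsReachSimplexPair (V : Finset ℕ) (Adj : ℕ → ℕ → Prop) {k : ℕ}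
    (x y : Fin k → ℕ) : Prop :=
  Function.Injective x ∧ Function.Injective y ∧
    (∀ i, x i ∈ V) ∧ (∀ i, y i ∈ V) ∧
    (∀ i j, j ≠ i → x j ∈ Reach Adj (y i)) ∧
    ¬ ∃ v ∈ V, ∀ i, x i ∈ Reach Adj v

/-- The DAG `(V, Adj)` contains a `k`-reachable-simplex. -/
def HasReachSimplex (V : Finset ℕ) (Adj : ℕ → ℕ → Prop) (k : ℕ) : Prop :=
  ∃ x y : Fin k → ℕ, IsReachSimplexPair V Adj x y

/-- `F` is α-acyclic. -/
def IsAlphaAcyclic (F : NatHypergraph) : Prop :=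
  ∃ (n : ℕ) (T : SimpleGraph (Fin n)) (f : Fin n → Finset ℕ),
    T.IsTree ∧ Function.Injective f ∧ (∀ i, f i ∈ F.edges) ∧
    (∀ e ∈ F.edges, ∃ i, f i = e) ∧
    ∀ i j b, OnPath T i j b → f i ∩ f j ⊆ f b

/-- The reachability hypergraph of the DAG `(V, Adj)`. -/
def reachHypergraph (V : Finset ℕ) (Adj : ℕ → ℕ → Prop) : NatHypergraph :=
  ⟨V, (sourcesOf V Adj).image fun s => V.filter fun v => v ∈ Reach Adj s⟩

/-- The clique completion of a hypergraph. -/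
def cliqueCompletion (H : NatHypergraph) : SimpleGraph ℕ where
  Adj u v := u ≠ v ∧ ∃ e ∈ H.edges, u ∈ e ∧ v ∈ e
  symm := by
    constructor
    intro u v h
    obtain ⟨huv, e, he, hu, hv⟩ := h
    exact ⟨huv.symm, e, he, hv, hu⟩
  loopless := by
    constructor
    intro u h
    exact h.1 rfl

/-- `G` has an induced cycle on `n` vertices. -/
def HasInducedCycle (G : SimpleGraph ℕ) (n : ℕ) : Prop :=
  ∃ f : ZMod n → ℕ, Function.Injective f ∧
    ∀ i j : ZMod n, G.Adj (f i) (f j) ↔ (j = i + 1 ∨ i = j + 1)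

/-- The number of colorful homomorphisms from `H` to `G` under the coloring `c`
(with color set `{1, …, |V(H)|}`). -/
def colHomCount (G H : NatHypergraph) (c : ℕ → ℕ) : ℕ :=
  Set.ncard {f : ℕ → ℕ | IsHom H G f ∧ (∀ v ∉ H.verts, f v = 0) ∧
    Set.BijOn (fun v => c (f v)) ↑H.verts ↑(Finset.Icc 1 H.verts.card)}

/-- The tensor product of hypergraphs (vertex pairs encoded by `Nat.pair`). -/
def tensor (G H : NatHypergraph) : NatHypergraph :=
  ⟨(G.verts ×ˢ H.verts).image fun p => Nat.pair p.1 p.2,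
    ((G.verts ×ˢ H.verts).image fun p => Nat.pair p.1 p.2).powerset.filter fun e =>
      (e.image fun m => (Nat.unpair m).1) ∈ G.edges ∧
      (e.image fun m => (Nat.unpair m).2) ∈ H.edges⟩

/-- `Sub(G,H)`: the number of subhypergraphs of `G` isomorphic to `H`. -/
def subCount (G H : NatHypergraph) : ℕ :=
  Set.ncard {p : Finset ℕ × Finset (Finset ℕ) |
    p.1 ⊆ G.verts ∧ (∀ e ∈ p.2, e ∈ G.edges ∧ e ⊆ p.1) ∧ Isomorphic H ⟨p.1, p.2⟩}

/-- Vertex renaming used in the construction of `G^H_l`: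
core vertices go to the matching vertex of the colorful hyperedge `e` of `G`,
vertices of `H'` outside the core go to their fresh copy indexed by `e`, and
vertices outside `H'` go to their unique copy. -/
def liftVert (S X : Finset ℕ) (π c : ℕ → ℕ) (e : Finset ℕ) (v : ℕ) : ℕ :=
  if v ∈ X then Nat.pair 0 ((e.filter fun u => c u = π v).sum id)
  else if v ∈ S then Nat.pair 2 (Nat.pair (Encodable.encode e) v)
  else Nat.pair 1 v

/-- The hypergraph `G^H_l` from the hardness construction. -/
def GHl (H G : NatHypergraph) (S X : Finset ℕ) (Vp : ℕ → Finset ℕ) (π c : ℕ → ℕ)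
    (k : ℕ) : NatHypergraph :=
  ⟨(G.verts.image fun v => Nat.pair 0 v) ∪ ((H.verts \ S).image fun v => Nat.pair 1 v) ∪
      (Finset.range k).biUnion fun i =>
        (G.edges.filter fun e => e.card = k - 1 ∧ e.image c = (Finset.range k).erase i).biUnion
          fun e => (Vp i).image fun v => Nat.pair 2 (Nat.pair (Encodable.encode e) v),
    ((H.edges.filter fun e => e ⊆ H.verts \ S).image fun e => e.image fun v => Nat.pair 1 v) ∪
      (Finset.range k).biUnion fun i =>
        (G.edges.filter fun e => e.card = k - 1 ∧ e.image c = (Finset.range k).erase i).biUnion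
          fun e =>
            (H.edges.filter fun e' => ¬ e' ⊆ H.verts \ S ∧
                e' ⊆ X ∪ Vp i ∪ (H.verts \ S)).image
              fun e' => e'.image (liftVert S X π c e)⟩

/-- The coloring of `G^H_l`. -/
def GHlColor (π c : ℕ → ℕ) (m : ℕ) : ℕ :=
  if (Nat.unpair m).1 = 0 then c (Nat.unpair m).2
  else if (Nat.unpair m).1 = 1 then π (Nat.unpair m).2
  else π (Nat.unpair (Nat.unpair m).2).2

/-- The grouping of the vertices of `G^H_l`: copied vertices first,
then the vertices of `G`, then the vertices of `V^ext`. -/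
def GHlGroup (m : ℕ) : ℕ :=
  if (Nat.unpair m).1 = 2 then 0 else if (Nat.unpair m).1 = 0 then 1 else 2

/-!
Order `V(G ⊗ H)` lexicographically: first by the given ordering of the `G`-coordinate, then by
the `H`-coordinate. The predecessors, within a hyperedge `e` of `G ⊗ H`, of a vertex `(g, h)` project
onto the predecessors of `g` in the projected hyperedge of `G`, so an arc of the `l`-skeleton of
`G ⊗ H` leaving `(g, h)` either stays in the fibre `{g} × V(H)` or projects to an arc of the
`l`-skeleton of `G` leaving `g`. The out-neighbours of `(g, h)` therefore lie in
`(N⁺(g) ∪ {g}) × V(H)`. The edge bound holds because every hyperedge of `G ⊗ H` is a subset of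
`e × V(H)` for some hyperedge `e` of `G`.
-/

theorem mem_tensor_verts {G H : NatHypergraph} {m : ℕ} :
    m ∈ (tensor G H).verts ↔ (Nat.unpair m).1 ∈ G.verts ∧ (Nat.unpair m).2 ∈ H.verts := by
  simp only [tensor, Finset.mem_image, Finset.mem_product]
  constructor
  · rintro ⟨⟨g, h⟩, ⟨hg, hh⟩, rfl⟩
    simpa [Nat.unpair_pair] using ⟨hg, hh⟩
  · exact fun hm => ⟨Nat.unpair m, hm, Nat.pair_unpair m⟩

theorem mem_tensor_edges {G H : NatHypergraph} {e : Finset ℕ} :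
    e ∈ (tensor G H).edges ↔ e ⊆ (tensor G H).verts ∧
      (e.image fun m => (Nat.unpair m).1) ∈ G.edges ∧
      (e.image fun m => (Nat.unpair m).2) ∈ H.edges := by
  simp only [tensor, Finset.mem_filter, Finset.mem_powerset]

theorem card_image_pair (s : Finset (ℕ × ℕ)) :
    (s.image fun p => Nat.pair p.1 p.2).card = s.card :=
  Finset.card_image_of_injective _ Nat.pairEquiv.injective

theorem card_tensor_verts (G H : NatHypergraph) :
    (tensor G H).verts.card = G.verts.card * H.verts.card := by
  rw [tensor, card_image_pair, Finset.card_product]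

theorem tensor_edges_subset_biUnion (G H : NatHypergraph) :
    (tensor G H).edges ⊆ G.edges.biUnion fun eg =>
      ((eg ×ˢ H.verts).image fun p : ℕ × ℕ => Nat.pair p.1 p.2).powerset := by
  intro e he
  obtain ⟨hev, heG, -⟩ := mem_tensor_edges.1 he
  refine Finset.mem_biUnion.2 ⟨_, heG, Finset.mem_powerset.2 fun m hm => ?_⟩
  refine Finset.mem_image.2 ⟨Nat.unpair m, Finset.mem_product.2 ⟨?_, ?_⟩, Nat.pair_unpair m⟩
  · exact Finset.mem_image_of_mem _ hm
  · exact (mem_tensor_verts.1 (hev hm)).2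

theorem card_tensor_edges_le (G H : NatHypergraph) :
    (tensor G H).edges.card ≤ 2 ^ (G.rank * H.verts.card) * G.edges.card := by
  calc (tensor G H).edges.card
      ≤ ∑ eg ∈ G.edges,
          ((eg ×ˢ H.verts).image fun p : ℕ × ℕ => Nat.pair p.1 p.2).powerset.card :=
        (Finset.card_le_card (tensor_edges_subset_biUnion G H)).trans Finset.card_biUnion_le
    _ ≤ ∑ _eg ∈ G.edges, 2 ^ (G.rank * H.verts.card) := by
        refine Finset.sum_le_sum fun eg heg => ?_
        rw [Finset.card_powerset, card_image_pair, Finset.card_product]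
        exact Nat.pow_le_pow_right two_pos
          (Nat.mul_le_mul_right _ (Finset.le_sup (f := Finset.card) heg))
    _ = 2 ^ (G.rank * H.verts.card) * G.edges.card := by
        rw [Finset.sum_const, smul_eq_mul, mul_comm]

/-- Lexicographic in (`π` of the first coordinate, second coordinate) as long as `N` exceeds
every second coordinate. -/
def lexOrder (π : ℕ → ℕ) (N m : ℕ) : ℕ := π (Nat.unpair m).1 * N + (Nat.unpair m).2

section lexOrder

variable {π : ℕ → ℕ} {N : ℕ}

theorem lexOrder_div {m : ℕ} (hm : (Nat.unpair m).2 < N) :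
    lexOrder π N m / N = π (Nat.unpair m).1 := by
  rw [lexOrder, Nat.mul_comm, Nat.mul_add_div (by omega), Nat.div_eq_of_lt hm, Nat.add_zero]

theorem lexOrder_mod {m : ℕ} (hm : (Nat.unpair m).2 < N) :
    lexOrder π N m % N = (Nat.unpair m).2 := by
  rw [lexOrder, Nat.mul_add_mod_self_right, Nat.mod_eq_of_lt hm]

theorem lexOrder_lt_lexOrder {m m' : ℕ} (hm : (Nat.unpair m).2 < N)
    (h : π (Nat.unpair m).1 < π (Nat.unpair m').1) : lexOrder π N m < lexOrder π N m' :=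
  calc lexOrder π N m < (π (Nat.unpair m).1 + 1) * N := by rw [lexOrder, Nat.succ_mul]; omega
    _ ≤ π (Nat.unpair m').1 * N := Nat.mul_le_mul_right _ h
    _ ≤ lexOrder π N m' := Nat.le_add_right _ _

theorem le_of_lexOrder_lt {m m' : ℕ} (hm : (Nat.unpair m).2 < N) (hm' : (Nat.unpair m').2 < N)
    (h : lexOrder π N m < lexOrder π N m') : π (Nat.unpair m).1 ≤ π (Nat.unpair m').1 := by
  rw [← lexOrder_div (π := π) hm, ← lexOrder_div (π := π) hm']
  exact Nat.div_le_div_right h.le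

end lexOrder

section tensor

variable {G H : NatHypergraph} {π : ℕ → ℕ} {N : ℕ}

theorem injOn_lexOrder (hπ : Set.InjOn π ↑G.verts) (hN : ∀ h ∈ H.verts, h < N) :
    Set.InjOn (lexOrder π N) ↑(tensor G H).verts := by
  intro u hu v hv huv
  obtain ⟨hu₁, hu₂⟩ := mem_tensor_verts.1 hu
  obtain ⟨hv₁, hv₂⟩ := mem_tensor_verts.1 hv
  have h₁ : (Nat.unpair u).1 = (Nat.unpair v).1 := by
    refine hπ hu₁ hv₁ ?_
    rw [← lexOrder_div (π := π) (hN _ hu₂), ← lexOrder_div (π := π) (hN _ hv₂), huv]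
  have h₂ : (Nat.unpair u).2 = (Nat.unpair v).2 := by
    rw [← lexOrder_mod (π := π) (hN _ hu₂), ← lexOrder_mod (π := π) (hN _ hv₂), huv]
  rw [← Nat.pair_unpair u, ← Nat.pair_unpair v, h₁, h₂]

theorem skelArc_tensor {l : ℕ∞} (hπ : Set.InjOn π ↑G.verts) (hN : ∀ h ∈ H.verts, h < N)
    {u v : ℕ} (hu : u ∈ (tensor G H).verts) (hv : v ∈ (tensor G H).verts)
    (huv : SkelArc (tensor G H) (lexOrder π N) l u v) :
    (Nat.unpair v).1 = (Nat.unpair u).1 ∨ SkelArc G π l (Nat.unpair u).1 (Nat.unpair v).1 := by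
  obtain ⟨hu₁, -⟩ := mem_tensor_verts.1 hu
  obtain ⟨hv₁, hv₂⟩ := mem_tensor_verts.1 hv
  refine or_iff_not_imp_left.2 fun hne => ?_
  obtain ⟨e, he, hue, hve, hlt, hcard⟩ := huv
  obtain ⟨hev, heG, -⟩ := mem_tensor_edges.1 he
  have hπlt : π (Nat.unpair u).1 < π (Nat.unpair v).1 :=
    (le_of_lexOrder_lt (hN _ (mem_tensor_verts.1 hu).2) (hN _ hv₂) hlt).lt_of_ne
      fun h => hne (hπ hv₁ hu₁ h.symm)
  have hbefore : ((e.image fun m => (Nat.unpair m).1).filter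
      fun w => π w < π (Nat.unpair u).1) ⊆
      (e.filter fun w => lexOrder π N w < lexOrder π N u).image fun m => (Nat.unpair m).1 := by
    intro g hg
    obtain ⟨hg₁, hg₂⟩ := Finset.mem_filter.1 hg
    obtain ⟨m, hm, rfl⟩ := Finset.mem_image.1 hg₁
    refine Finset.mem_image_of_mem _ (Finset.mem_filter.2 ⟨hm, ?_⟩)
    exact lexOrder_lt_lexOrder (hN _ (mem_tensor_verts.1 (hev hm)).2) hg₂
  refine ⟨_, heG, Finset.mem_image_of_mem _ hue, Finset.mem_image_of_mem _ hve, hπlt,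
    le_trans ?_ hcard⟩
  exact_mod_cast (Finset.card_le_card hbefore).trans Finset.card_image_le

theorem loutdeg_tensor_le {l : ℕ∞} (hπ : Set.InjOn π ↑G.verts) (hN : ∀ h ∈ H.verts, h < N)
    {u : ℕ} (hu : u ∈ (tensor G H).verts) :
    loutdeg (tensor G H) (lexOrder π N) l u ≤
      H.verts.card * (loutdeg G π l (Nat.unpair u).1 + 1) := by
  set out := G.verts.filter fun g => SkelArc G π l (Nat.unpair u).1 g
  have hsub : ((tensor G H).verts.filter fun v => SkelArc (tensor G H) (lexOrder π N) l u v) ⊆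
      ((insert (Nat.unpair u).1 out) ×ˢ H.verts).image fun p : ℕ × ℕ => Nat.pair p.1 p.2 := by
    intro v hv
    obtain ⟨hvt, huv⟩ := Finset.mem_filter.1 hv
    obtain ⟨hv₁, hv₂⟩ := mem_tensor_verts.1 hvt
    refine Finset.mem_image.2 ⟨Nat.unpair v, Finset.mem_product.2 ⟨?_, hv₂⟩, Nat.pair_unpair v⟩
    rcases skelArc_tensor hπ hN hu hvt huv with h | h
    · exact h ▸ Finset.mem_insert_self _ _
    · exact Finset.mem_insert_of_mem (Finset.mem_filter.2 ⟨hv₁, h⟩)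
  calc loutdeg (tensor G H) (lexOrder π N) l u
      ≤ ((insert (Nat.unpair u).1 out) ×ˢ H.verts).card :=
        (Finset.card_le_card hsub).trans Finset.card_image_le
    _ ≤ (out.card + 1) * H.verts.card := by
        rw [Finset.card_product]
        exact Nat.mul_le_mul_right _ (Finset.card_insert_le _ _)
    _ = H.verts.card * (loutdeg G π l (Nat.unpair u).1 + 1) := Nat.mul_comm _ _

end tensor

theorem stmt16_general (G H : NatHypergraph) :
    (tensor G H).verts.card = G.verts.card * H.verts.card ∧
    (tensor G H).edges.card ≤ 2 ^ (G.rank * H.verts.card) * G.edges.card ∧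
    ∀ (l : ℕ∞) (d : ℕ) (π : ℕ → ℕ), Set.InjOn π ↑G.verts →
      (∀ v ∈ G.verts, loutdeg G π l v ≤ d) →
      ∃ π' : ℕ → ℕ, Set.InjOn π' ↑(tensor G H).verts ∧
        ∀ v ∈ (tensor G H).verts, loutdeg (tensor G H) π' l v ≤ H.verts.card * (d + 1) := by
  refine ⟨card_tensor_verts G H, card_tensor_edges_le G H, fun l d π hπ hd => ?_⟩
  have hN : ∀ h ∈ H.verts, h < H.verts.sup id + 1 :=
    fun h hh => Nat.lt_succ_of_le (Finset.le_sup (f := id) hh)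
  refine ⟨lexOrder π (H.verts.sup id + 1), injOn_lexOrder hπ hN, fun u hu => ?_⟩
  calc loutdeg (tensor G H) (lexOrder π _) l u
      ≤ H.verts.card * (loutdeg G π l (Nat.unpair u).1 + 1) := loutdeg_tensor_le hπ hN hu
    _ ≤ H.verts.card * (d + 1) := by gcongr; exact hd _ (mem_tensor_verts.1 hu).1

theorem stmt16 (G H : NatHypergraph) (hG : G.Good) (hH : H.Good) :
    (tensor G H).verts.card = G.verts.card * H.verts.card ∧
    (tensor G H).edges.card ≤ 2 ^ (G.rank * H.verts.card) * G.edges.card ∧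
    ∀ (l : ℕ∞) (d : ℕ) (π : ℕ → ℕ), Set.InjOn π ↑G.verts →
      (∀ v ∈ G.verts, loutdeg G π l v ≤ d) →
      ∃ π' : ℕ → ℕ, Set.InjOn π' ↑(tensor G H).verts ∧
        ∀ v ∈ (tensor G H).verts, loutdeg (tensor G H) π' l v ≤ H.verts.card * (d + 1) :=
  stmt16_general G H
end
end

section
/- For every hypergraph H there is a function γ: Q(H) → ℚ with γ(H′) ≠ 0 for every H′ ∈ Q(H), such that for every hypergraph G: Sub(G,H) = Σ_{H′ ∈ Q(H)} γ(H′) · Hom(G, H′). -/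
open scoped Classical

noncomputable section

/-!
Count the injective homomorphisms `H → G` in two ways. Each is an isomorphism of `H` onto a
subhypergraph of `G`, so there are `Sub(G,H) · |Aut(H)|` of them. On the other hand, once `V(H)`
is ordered, `f` is injective exactly when `∏ v, (1 - #{u < v | f u = f v})` is `1` rather than `0`.
Expanding the product, a term chooses for every `v` either `v` itself or an earlier `u` with
`f u = f v`: a pointer map `c`, with sign `(-1) ^ #{v | c v ≠ v}`. Summed over `f`, the term of `c`
counts the homomorphisms from the quotient of `H` by the chains of `c`. Every partition of `V(H)`
arises from some pointer map, and all pointer maps whose quotient is isomorphic to a given `X`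
carry the same sign `(-1) ^ (|V(H)| - |V(X)|)`, so grouping the terms by isomorphism type leaves
no zero coefficient.
-/

open Finset

def funsOn {α β : Type*} [DecidableEq α] (s : Finset α) (t : α → Finset β) (d : α → β) :
    Finset (α → β) :=
  (s.pi t).image fun p v => if h : v ∈ s then p v h else d v

section FunsOn

variable {α β : Type*} [DecidableEq α] {s : Finset α} {t : α → Finset β} {d f : α → β}

theorem mem_funsOn : f ∈ funsOn s t d ↔ (∀ v ∈ s, f v ∈ t v) ∧ ∀ v ∉ s, f v = d v := by
  constructor
  · intro hf
    obtain ⟨p, hp, rfl⟩ := mem_image.mp hf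
    exact ⟨fun v hv => by simpa [hv] using mem_pi.mp hp v hv, fun v hv => by simp [hv]⟩
  · rintro ⟨hs, hd⟩
    refine mem_image.mpr ⟨fun v _ => f v, mem_pi.mpr hs, funext fun v => ?_⟩
    by_cases hv : v ∈ s <;> simp [hv, hd]

theorem prod_sum_eq_sum_funsOn {R : Type*} [CommSemiring R] (s : Finset α) (t : α → Finset β)
    (d : α → β) (w : α → β → R) :
    ∏ v ∈ s, ∑ u ∈ t v, w v u = ∑ c ∈ funsOn s t d, ∏ v ∈ s, w v (c v) := by
  have hinj : Set.InjOn (fun (p : ∀ v ∈ s, β) v => if h : v ∈ s then p v h else d v)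
      (s.pi t) := by
    intro p _ p' _ h
    funext v hv
    simpa [hv] using congrFun h v
  rw [prod_sum, funsOn, sum_image hinj]
  refine sum_congr rfl fun p _ => ?_
  rw [← prod_attach s]
  exact prod_congr rfl fun v _ => by simp [v.2]

end FunsOn

theorem Finset.image_piecewise_of_subset {α β : Type*} [DecidableEq β] {s e : Finset α}
    (f g : α → β) [∀ a, Decidable (a ∈ s)] (h : e ⊆ s) : e.image (s.piecewise f g) = e.image f :=
  image_congr fun _ hv => piecewise_eq_of_mem _ _ _ (h hv)

theorem Finset.exists_transversal {α : Type*} (S : Finset α) (r : α → α → Prop)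
    (hrefl : ∀ x ∈ S, r x x) (hsymm : ∀ x ∈ S, ∀ y ∈ S, r x y → r y x)
    (htrans : ∀ x ∈ S, ∀ y ∈ S, ∀ z ∈ S, r x y → r y z → r x z) :
    ∃ Q ⊆ S, ∀ x ∈ S, ∃! y, y ∈ Q ∧ r x y := by
  let s : Setoid S := ⟨fun x y => r x y, ⟨fun x => hrefl x x.2,
    fun {x y} => hsymm x x.2 y y.2, fun {x y z} => htrans x x.2 y y.2 z z.2⟩⟩
  refine ⟨univ.image fun k : Quotient s => k.out.1, fun y hy => ?_, fun x hx => ?_⟩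
  · obtain ⟨k, -, rfl⟩ := mem_image.mp hy
    exact k.out.2
  · refine ⟨(⟦⟨x, hx⟩⟧ : Quotient s).out.1, ⟨mem_image_of_mem _ (mem_univ _), ?_⟩, ?_⟩
    · exact hsymm _ (Quotient.out (s := s) ⟦⟨x, hx⟩⟧).2 _ hx (Quotient.mk_out (s := s) ⟨x, hx⟩)
    · rintro _ ⟨hy, hxy⟩
      obtain ⟨k, -, rfl⟩ := mem_image.mp hy
      have hk : (⟦⟨x, hx⟩⟧ : Quotient s) = k := by
        rw [← k.out_eq]
        exact Quotient.sound hxy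
      rw [hk]

theorem prod_one_sub_card_eq_ite_injOn {α β R : Type*} [LinearOrder α] [DecidableEq β]
    [CommRing R] (s : Finset α) (f : α → β) :
    ∏ v ∈ s, (1 - (#{u ∈ s | u < v ∧ f u = f v} : R)) = if Set.InjOn f s then 1 else 0 := by
  induction s using Finset.induction_on_max with
  | empty => simp
  | insert a s ha ih =>
    have has : a ∉ s := fun h => lt_irrefl a (ha a h)
    have hrest : ∀ v ∈ s, #{u ∈ insert a s | u < v ∧ f u = f v} = #{u ∈ s | u < v ∧ f u = f v} :=
      fun v hv => by rw [filter_insert, if_neg fun h => lt_asymm h.1 (ha v hv)]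
    have hlast : #{u ∈ insert a s | u < a ∧ f u = f a} = #{u ∈ s | f u = f a} := by
      rw [filter_insert, if_neg fun h => lt_irrefl a h.1]
      exact congrArg card (filter_congr fun u hu => and_iff_right (ha u hu))
    have hinsert : Set.InjOn f ↑(insert a s) ↔ Set.InjOn f s ∧ f a ∉ f '' s := by
      rw [coe_insert]; exact Set.injOn_insert (by simpa using has)
    rw [prod_insert has, prod_congr rfl fun v hv => by rw [hrest v hv], ih, hlast]
    simp only [hinsert]
    by_cases hinj : Set.InjOn f s
    swap
    · simp [hinj]
    by_cases hfa : ∃ u ∈ s, f u = f a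
    · obtain ⟨u, hu, hfu⟩ := id hfa
      have hone : {w ∈ s | f w = f a} = {u} := by
        ext w
        simp only [mem_filter, mem_singleton]
        exact ⟨fun h => hinj h.1 hu (h.2.trans hfu.symm), by rintro rfl; exact ⟨hu, hfu⟩⟩
      simp [hinj, hone, hfa]
    · have hzero : {w ∈ s | f w = f a} = ∅ :=
        filter_eq_empty_iff.mpr fun w hw h => hfa ⟨w, hw, h⟩
      simp [hinj, hzero, hfa]

def pointerMaps (s : Finset ℕ) : Finset (ℕ → ℕ) := funsOn s (fun v => {u ∈ s | u ≤ v}) id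

theorem mem_pointerMaps {s : Finset ℕ} {c : ℕ → ℕ} :
    c ∈ pointerMaps s ↔ (∀ v ∈ s, c v ∈ s ∧ c v ≤ v) ∧ ∀ v ∉ s, c v = v := by
  simp [pointerMaps, mem_funsOn]

theorem ite_injOn_eq_sum_pointerMaps {α R : Type*} [DecidableEq α] [CommRing R]
    (s : Finset ℕ) (f : ℕ → α) :
    (if Set.InjOn f s then 1 else 0 : R) = ∑ c ∈ pointerMaps s,
      if ∀ v ∈ s, f (c v) = f v then (-1) ^ #{v ∈ s | c v ≠ v} else 0 := by
  set w : ℕ → ℕ → R := fun v u => if u = v then 1 else if f u = f v then -1 else 0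
  have hrow : ∀ v ∈ s, ∑ u ∈ s with u ≤ v, w v u = 1 - (#{u ∈ s | u < v ∧ f u = f v} : R) := by
    intro v hv
    have hsplit : ∀ u ∈ s, (if u ≤ v then w v u else 0)
        = (if v = u then 1 else 0) - (if u < v ∧ f u = f v then 1 else 0) := by
      intro u _
      rcases lt_trichotomy u v with h | rfl | h
      · by_cases hf : f u = f v <;> simp [w, h, h.ne, h.ne', h.le, hf]
      · simp [w]
      · simp [w, h.not_ge, h.ne, h.not_gt]
    rw [sum_filter, sum_congr rfl hsplit, sum_sub_distrib, sum_ite_eq, if_pos hv,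
      natCast_card_filter]
  have hcol : ∀ c ∈ pointerMaps s, ∏ v ∈ s, w v (c v)
      = if ∀ v ∈ s, f (c v) = f v then (-1) ^ #{v ∈ s | c v ≠ v} else 0 := by
    intro c _
    by_cases hc : ∀ v ∈ s, f (c v) = f v
    · rw [if_pos hc, prod_congr rfl fun v hv => show w v (c v) = if c v = v then 1 else -1 by
        simp [w, hc v hv], prod_ite, prod_const_one, prod_const, one_mul]
    · rw [if_neg hc]
      obtain ⟨v, hv, hfv⟩ := not_forall₂.mp hc
      have hcv : c v ≠ v := fun h => hfv (by rw [h])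
      exact prod_eq_zero hv (by simp [w, hfv, hcv])
  rw [← prod_one_sub_card_eq_ite_injOn, ← prod_congr rfl hrow, prod_sum_eq_sum_funsOn _ _ id]
  exact sum_congr rfl hcol

def pointerRoot (c : ℕ → ℕ) (v : ℕ) : ℕ := if c v < v then pointerRoot c (c v) else v
termination_by v

section PointerRoot

variable {s : Finset ℕ} {c : ℕ → ℕ} {v : ℕ}

theorem pointerRoot_of_lt (h : c v < v) : pointerRoot c v = pointerRoot c (c v) := by
  rw [pointerRoot, if_pos h]

theorem pointerRoot_of_not_lt (h : ¬c v < v) : pointerRoot c v = v := by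
  rw [pointerRoot, if_neg h]

variable (hc : c ∈ pointerMaps s)
include hc

theorem pointerRoot_apply (hv : v ∈ s) : pointerRoot c (c v) = pointerRoot c v := by
  by_cases h : c v < v
  · rw [pointerRoot_of_lt h]
  · rw [le_antisymm ((mem_pointerMaps.mp hc).1 v hv).2 (not_lt.mp h)]

theorem pointerRoot_mem_and_isFixedPt (hv : v ∈ s) :
    pointerRoot c v ∈ s ∧ Function.IsFixedPt c (pointerRoot c v) := by
  induction v using Nat.strong_induction_on with
  | _ v ih =>
    obtain ⟨hcv, hle⟩ := (mem_pointerMaps.mp hc).1 v hv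
    by_cases h : c v < v
    · rw [pointerRoot_of_lt h]
      exact ih (c v) h hcv
    · rw [pointerRoot_of_not_lt h]
      exact ⟨hv, le_antisymm hle (not_lt.mp h)⟩

theorem pointerRoot_eq_self_iff (hv : v ∈ s) : pointerRoot c v = v ↔ c v = v := by
  refine ⟨fun h => ?_, fun h => pointerRoot_of_not_lt (by omega)⟩
  rw [← h]
  exact (pointerRoot_mem_and_isFixedPt hc hv).2

theorem apply_pointerRoot {α : Type*} {f : ℕ → α} (hf : ∀ v ∈ s, f (c v) = f v) (hv : v ∈ s) :
    f (pointerRoot c v) = f v := by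
  induction v using Nat.strong_induction_on with
  | _ v ih =>
    by_cases h : c v < v
    · rw [pointerRoot_of_lt h, ih (c v) h ((mem_pointerMaps.mp hc).1 v hv).1, hf v hv]
    · rw [pointerRoot_of_not_lt h]

theorem forall_apply_eq_iff_pointerRoot {α : Type*} {f : ℕ → α} :
    (∀ v ∈ s, f (c v) = f v) ↔
      ∀ u ∈ s, ∀ v ∈ s, pointerRoot c u = pointerRoot c v → f u = f v := by
  refine ⟨fun hf u hu v hv h => ?_, fun hf v hv => ?_⟩
  · rw [← apply_pointerRoot hc hf hu, h, apply_pointerRoot hc hf hv]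
  · exact hf _ ((mem_pointerMaps.mp hc).1 v hv).1 v hv (pointerRoot_apply hc hv)

theorem card_moved_add_card_image_pointerRoot :
    #{v ∈ s | c v ≠ v} + #(s.image (pointerRoot c)) = #s := by
  have himage : s.image (pointerRoot c) = {v ∈ s | c v = v} := by
    ext w
    simp only [mem_image, mem_filter]
    constructor
    · rintro ⟨v, hv, rfl⟩
      exact pointerRoot_mem_and_isFixedPt hc hv
    · rintro ⟨hw, hcw⟩
      exact ⟨w, hw, (pointerRoot_eq_self_iff hc hw).mpr hcw⟩
  rw [himage, add_comm, card_filter_add_card_filter_not]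

end PointerRoot

/-- Each vertex points to the least element of its block. -/
theorem exists_pointerMaps_pointerRoot_eq_iff {α : Type*} (s : Finset ℕ) (f : ℕ → α) :
    ∃ c ∈ pointerMaps s, ∀ u ∈ s, ∀ v ∈ s, pointerRoot c u = pointerRoot c v ↔ f u = f v := by
  set c : ℕ → ℕ := fun v => if v ∈ s then sInf {u | u ∈ s ∧ f u = f v} else v
  have hmem : ∀ v ∈ s, c v ∈ s ∧ f (c v) = f v := fun v hv => by
    simpa [c, hv] using Nat.sInf_mem (s := {u | u ∈ s ∧ f u = f v}) ⟨v, hv, rfl⟩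
  have hle : ∀ v ∈ s, c v ≤ v := fun v hv => by
    simpa [c, hv] using Nat.sInf_le (s := {u | u ∈ s ∧ f u = f v}) ⟨hv, rfl⟩
  have hcongr : ∀ u ∈ s, ∀ v ∈ s, f u = f v → c u = c v := fun u hu v hv h => by
    simp [c, hu, hv, h]
  have hc : c ∈ pointerMaps s :=
    mem_pointerMaps.mpr ⟨fun v hv => ⟨(hmem v hv).1, hle v hv⟩, fun v hv => by simp [c, hv]⟩
  have hroot : ∀ v ∈ s, pointerRoot c v = c v := fun v hv => by
    have hcc : c (c v) = c v := hcongr _ (hmem v hv).1 v hv (hmem v hv).2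
    by_cases h : c v < v
    · rw [pointerRoot_of_lt h, pointerRoot_of_not_lt (by omega)]
    · rw [pointerRoot_of_not_lt h]
      exact (le_antisymm (hle v hv) (not_lt.mp h)).symm
  refine ⟨c, hc, fun u hu v hv => ?_⟩
  rw [hroot u hu, hroot v hv]
  exact ⟨fun h => by rw [← (hmem u hu).2, h, (hmem v hv).2], hcongr u hu v hv⟩

theorem NatHypergraph.Good.quotientBy {H : NatHypergraph} (hH : H.Good) (q : ℕ → ℕ) :
    (quotientBy H q).Good := by
  intro e he
  obtain ⟨e', he', rfl⟩ := mem_image.mp he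
  exact ⟨image_subset_image (hH e' he').1, (hH e' he').2.image q⟩

theorem quotientBy_id (H : NatHypergraph) : quotientBy H id = H := by
  simp [quotientBy]

theorem quotientBy_quotientBy (H : NatHypergraph) (f g : ℕ → ℕ) :
    quotientBy (quotientBy H f) g = quotientBy H (g ∘ f) := by
  simp [quotientBy, image_image, Function.comp_def]

theorem quotientBy_congr {H : NatHypergraph} (hH : H.Good) {f g : ℕ → ℕ}
    (h : ∀ v ∈ H.verts, f v = g v) : quotientBy H f = quotientBy H g := by
  simp only [quotientBy, NatHypergraph.mk.injEq]
  exact ⟨image_congr h, image_congr fun e he => image_congr fun v hv => h v ((hH e he).1 hv)⟩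

theorem bijOn_verts_and_edges_iff {H K : NatHypergraph} {f : ℕ → ℕ} :
    (Set.BijOn f H.verts K.verts ∧ K.edges = H.edges.image fun e => e.image f) ↔
      Set.InjOn f H.verts ∧ K = quotientBy H f := by
  constructor
  · rintro ⟨hf, hE⟩
    refine ⟨hf.injOn, ?_⟩
    have hV : H.verts.image f = K.verts := coe_injective (by rw [coe_image, hf.image_eq])
    rw [quotientBy, hV, ← hE]
  · rintro ⟨hf, rfl⟩
    exact ⟨by simpa [quotientBy] using hf.bijOn_image, rfl⟩

theorem isomorphic_iff_exists_quotientBy {H K : NatHypergraph} :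
    Isomorphic H K ↔ ∃ f : ℕ → ℕ, Set.InjOn f H.verts ∧ K = quotientBy H f :=
  exists_congr fun _ => bijOn_verts_and_edges_iff

theorem Isomorphic.refl (H : NatHypergraph) : Isomorphic H H :=
  isomorphic_iff_exists_quotientBy.mpr ⟨id, Set.injOn_id _, (quotientBy_id H).symm⟩

theorem Isomorphic.trans {H K L : NatHypergraph} (hHK : Isomorphic H K)
    (hKL : Isomorphic K L) : Isomorphic H L := by
  obtain ⟨f, hf, rfl⟩ := isomorphic_iff_exists_quotientBy.mp hHK
  obtain ⟨g, hg, rfl⟩ := isomorphic_iff_exists_quotientBy.mp hKL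
  refine isomorphic_iff_exists_quotientBy.mpr ⟨g ∘ f, hg.comp hf ?_, quotientBy_quotientBy H f g⟩
  intro v hv
  simpa [quotientBy] using ⟨v, hv, rfl⟩

theorem Isomorphic.symm {H K : NatHypergraph} (hH : H.Good) (h : Isomorphic H K) :
    Isomorphic K H := by
  obtain ⟨f, hf, rfl⟩ := isomorphic_iff_exists_quotientBy.mp h
  refine isomorphic_iff_exists_quotientBy.mpr ⟨Function.invFunOn f H.verts, ?_, ?_⟩
  · simpa [quotientBy] using Function.invFunOn_injOn_image f (H.verts : Set ℕ)
  · rw [quotientBy_quotientBy,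
      quotientBy_congr hH (f := Function.invFunOn f H.verts ∘ f) (g := id)
        fun v hv => hf.leftInvOn_invFunOn hv,
      quotientBy_id]

theorem Isomorphic.card_verts_eq {H K : NatHypergraph} (h : Isomorphic H K) :
    #H.verts = #K.verts := by
  obtain ⟨f, hf, rfl⟩ := isomorphic_iff_exists_quotientBy.mp h
  exact (card_image_of_injOn hf).symm

theorem isomorphic_quotientBy_of_fibers {H : NatHypergraph} (hH : H.Good) {f g : ℕ → ℕ}
    (h : ∀ u ∈ H.verts, ∀ v ∈ H.verts, f u = f v ↔ g u = g v) :
    Isomorphic (quotientBy H f) (quotientBy H g) := by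
  set φ := g ∘ Function.invFunOn f H.verts
  have hφ : ∀ v ∈ H.verts, φ (f v) = g v := fun v hv =>
    (h _ (Function.invFunOn_mem ⟨v, hv, rfl⟩) v hv).mp (Function.invFunOn_eq ⟨v, hv, rfl⟩)
  refine isomorphic_iff_exists_quotientBy.mpr ⟨φ, ?_, ?_⟩
  · intro x hx y hy hxy
    simp only [quotientBy, coe_image, Set.mem_image, mem_coe] at hx hy
    obtain ⟨u, hu, rfl⟩ := hx
    obtain ⟨v, hv, rfl⟩ := hy
    rw [hφ u hu, hφ v hv] at hxy
    exact (h u hu v hv).mpr hxy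
  · rw [quotientBy_quotientBy, quotientBy_congr hH (f := φ ∘ f) hφ]

def homFinset (G H : NatHypergraph) : Finset (ℕ → ℕ) :=
  {f ∈ funsOn H.verts (fun _ => G.verts) fun _ => 0 | IsHom H G f}

theorem mem_homFinset {G H : NatHypergraph} {f : ℕ → ℕ} :
    f ∈ homFinset G H ↔ IsHom H G f ∧ ∀ v ∉ H.verts, f v = 0 := by
  simp only [homFinset, mem_filter, mem_funsOn]
  exact ⟨fun h => ⟨h.2, h.1.2⟩, fun h => ⟨⟨h.1.1, h.2⟩, h.1⟩⟩

theorem homCount_eq_card (G H : NatHypergraph) : homCount G H = #(homFinset G H) := by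
  rw [homCount, ← Set.ncard_coe_finset]
  congr 1
  ext f
  simp [mem_homFinset]

def descend (V : Finset ℕ) (q f : ℕ → ℕ) : ℕ → ℕ :=
  (V.image q).piecewise (f ∘ Function.invFunOn q V) fun _ => 0

section Descend

variable {V : Finset ℕ} {q f : ℕ → ℕ}

theorem descend_apply (hf : ∀ u ∈ V, ∀ v ∈ V, q u = q v → f u = f v) {v : ℕ} (hv : v ∈ V) :
    descend V q f (q v) = f v := by
  rw [descend, piecewise_eq_of_mem _ _ _ (mem_image_of_mem q hv), Function.comp_apply]
  exact hf _ (Function.invFunOn_mem ⟨v, hv, rfl⟩) v hv (Function.invFunOn_eq ⟨v, hv, rfl⟩)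

theorem descend_of_notMem {w : ℕ} (hw : w ∉ V.image q) : descend V q f w = 0 :=
  piecewise_eq_of_notMem _ _ _ hw

theorem descend_piecewise_comp (h : ℕ → ℕ) {w : ℕ} (hw : w ∈ V.image q) :
    descend V q (V.piecewise (h ∘ q) fun _ => 0) w = h w := by
  obtain ⟨v, hv, rfl⟩ := mem_image.mp hw
  rw [descend_apply (fun u hu v hv huv => by simp [hu, hv, huv]) hv, piecewise_eq_of_mem _ _ _ hv,
    Function.comp_apply]

end Descend

theorem piecewise_comp_mem_homFinset {G H : NatHypergraph} (hH : H.Good) {q h : ℕ → ℕ}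
    (hh : h ∈ homFinset G (quotientBy H q)) :
    H.verts.piecewise (h ∘ q) (fun _ => 0) ∈ homFinset G H := by
  obtain ⟨⟨hV, hE⟩, -⟩ := mem_homFinset.mp hh
  refine mem_homFinset.mpr ⟨⟨fun v hv => ?_, fun e he => ?_⟩,
    fun v hv => piecewise_eq_of_notMem _ _ _ hv⟩
  · rw [piecewise_eq_of_mem _ _ _ hv]
    exact hV _ (mem_image_of_mem q hv)
  · rw [image_piecewise_of_subset _ _ (hH e he).1, ← image_image]
    exact hE _ (mem_image_of_mem _ he)

theorem descend_mem_homFinset {G H : NatHypergraph} (hH : H.Good) {q f : ℕ → ℕ}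
    (hf : f ∈ homFinset G H) (hq : ∀ u ∈ H.verts, ∀ v ∈ H.verts, q u = q v → f u = f v) :
    descend H.verts q f ∈ homFinset G (quotientBy H q) := by
  obtain ⟨⟨hV, hE⟩, -⟩ := mem_homFinset.mp hf
  refine mem_homFinset.mpr ⟨⟨fun w hw => ?_, fun e' he' => ?_⟩, fun w => descend_of_notMem⟩
  · obtain ⟨v, hv, rfl⟩ := mem_image.mp hw
    rw [descend_apply hq hv]
    exact hV v hv
  · obtain ⟨e, he, rfl⟩ := mem_image.mp he'
    rw [image_image]
    convert hE e he using 1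
    exact image_congr fun v hv => descend_apply hq ((hH e he).1 hv)

theorem homCount_quotientBy {H : NatHypergraph} (hH : H.Good) (G : NatHypergraph) (q : ℕ → ℕ) :
    homCount G (quotientBy H q) =
      #{f ∈ homFinset G H | ∀ u ∈ H.verts, ∀ v ∈ H.verts, q u = q v → f u = f v} := by
  rw [homCount_eq_card]
  refine card_nbij' (fun h => H.verts.piecewise (h ∘ q) fun _ => 0) (descend H.verts q)
    (fun h hh => ?_) (fun f hf => ?_) (fun h hh => ?_) (fun f hf => ?_)
  · refine mem_filter.mpr ⟨piecewise_comp_mem_homFinset hH hh, fun u hu v hv huv => ?_⟩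
    simp [hu, hv, huv]
  · exact descend_mem_homFinset hH (mem_filter.mp hf).1 (mem_filter.mp hf).2
  · funext w
    by_cases hw : w ∈ H.verts.image q
    · exact descend_piecewise_comp h hw
    · rw [descend_of_notMem hw, (mem_homFinset.mp hh).2 w hw]
  · funext v
    dsimp only
    by_cases hv : v ∈ H.verts
    · rw [piecewise_eq_of_mem _ _ _ hv, Function.comp_apply,
        descend_apply (mem_filter.mp hf).2 hv]
    · rw [piecewise_eq_of_notMem _ _ _ hv, (mem_homFinset.mp (mem_filter.mp hf).1).2 v hv]

theorem Isomorphic.homCount_eq {H K : NatHypergraph} (hH : H.Good) (h : Isomorphic H K)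
    (G : NatHypergraph) : homCount G H = homCount G K := by
  obtain ⟨g, hg, rfl⟩ := isomorphic_iff_exists_quotientBy.mp h
  rw [homCount_quotientBy hH, filter_true_of_mem fun f _ u hu v hv huv => by rw [hg hu hv huv],
    homCount_eq_card]

theorem card_injOn_homFinset_eq_sum {R : Type*} [CommRing R] {H : NatHypergraph} (hH : H.Good)
    (G : NatHypergraph) :
    (#{f ∈ homFinset G H | Set.InjOn f H.verts} : R) = ∑ c ∈ pointerMaps H.verts,
      (-1) ^ #{v ∈ H.verts | c v ≠ v} * (homCount G (quotientBy H (pointerRoot c)) : R) := by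
  calc (#{f ∈ homFinset G H | Set.InjOn f H.verts} : R)
      = ∑ f ∈ homFinset G H, ∑ c ∈ pointerMaps H.verts,
          if ∀ v ∈ H.verts, f (c v) = f v then (-1) ^ #{v ∈ H.verts | c v ≠ v} else 0 := by
        rw [natCast_card_filter]
        exact sum_congr rfl fun f _ => ite_injOn_eq_sum_pointerMaps _ _
    _ = _ := by
        rw [sum_comm]
        refine sum_congr rfl fun c hc => ?_
        rw [homCount_quotientBy hH, ← filter_congr fun f _ => forall_apply_eq_iff_pointerRoot hc,
          ← sum_filter, sum_const, nsmul_eq_mul, mul_comm]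

def isoFinset (H K : NatHypergraph) (d : ℕ → ℕ) : Finset (ℕ → ℕ) :=
  {f ∈ funsOn H.verts (fun _ => K.verts) d | Set.InjOn f H.verts ∧ K = quotientBy H f}

theorem mem_isoFinset {H K : NatHypergraph} {d f : ℕ → ℕ} :
    f ∈ isoFinset H K d ↔
      (Set.InjOn f H.verts ∧ K = quotientBy H f) ∧ ∀ v ∉ H.verts, f v = d v := by
  simp only [isoFinset, mem_filter, mem_funsOn]
  constructor
  · exact fun h => ⟨h.2, h.1.2⟩
  · rintro ⟨⟨hf, rfl⟩, hd⟩
    exact ⟨⟨fun v hv => mem_image_of_mem f hv, hd⟩, hf, rfl⟩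

theorem apply_mem_of_mem_isoFinset {H K : NatHypergraph} {d f : ℕ → ℕ} (hf : f ∈ isoFinset H K d)
    {v : ℕ} (hv : v ∈ H.verts) : f v ∈ K.verts :=
  (mem_funsOn.mp (mem_filter.mp hf).1).1 v hv

theorem autCount_eq_card (H : NatHypergraph) : autCount H = #(isoFinset H H id) := by
  rw [autCount, ← Set.ncard_coe_finset]
  congr 1
  ext f
  rw [Set.mem_ofPred_eq, mem_coe, mem_isoFinset, ← bijOn_verts_and_edges_iff,
    eq_comm (a := H.edges)]
  exact ⟨fun h => ⟨h.2, h.1⟩, fun h => ⟨h.2, h.1⟩⟩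

theorem autCount_pos (H : NatHypergraph) : 0 < autCount H := by
  rw [autCount_eq_card]
  exact card_pos.mpr ⟨id, mem_isoFinset.mpr ⟨⟨Set.injOn_id _, (quotientBy_id H).symm⟩,
    fun _ _ => rfl⟩⟩

theorem card_isoFinset_congr {H K K' : NatHypergraph} (hH : H.Good) (hK : K.Good)
    (h : Isomorphic K K') (d d' : ℕ → ℕ) : #(isoFinset H K d) = #(isoFinset H K' d') := by
  obtain ⟨g, hg, rfl⟩ := isomorphic_iff_exists_quotientBy.mp h
  set g' := Function.invFunOn g K.verts
  have hgg' : K = quotientBy (quotientBy K g) g' := by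
    rw [quotientBy_quotientBy, quotientBy_congr hK (f := g' ∘ g) (g := id)
      fun v hv => hg.leftInvOn_invFunOn hv, quotientBy_id]
  refine card_nbij' (fun f => H.verts.piecewise (g ∘ f) d') (fun f => H.verts.piecewise (g' ∘ f) d)
    ?_ ?_ ?_ ?_
  · intro f hf
    obtain ⟨⟨hfinj, hKf⟩, -⟩ := mem_isoFinset.mp hf
    have hmaps : Set.MapsTo f H.verts K.verts := fun v hv => apply_mem_of_mem_isoFinset hf hv
    refine mem_isoFinset.mpr ⟨⟨(hg.comp hfinj hmaps).congr
      fun v hv => (piecewise_eq_of_mem _ _ _ hv).symm, ?_⟩,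
      fun v hv => piecewise_eq_of_notMem _ _ _ hv⟩
    rw [hKf, quotientBy_quotientBy, quotientBy_congr hH fun v hv => ?_]
    exact (piecewise_eq_of_mem _ _ _ hv).symm
  · intro f hf
    obtain ⟨⟨hfinj, hKf⟩, -⟩ := mem_isoFinset.mp hf
    have hmaps : Set.MapsTo f H.verts (g '' K.verts) := fun v hv => by
      simpa [quotientBy] using apply_mem_of_mem_isoFinset hf hv
    refine mem_isoFinset.mpr ⟨⟨((Function.invFunOn_injOn_image g _).comp hfinj hmaps).congr
      fun v hv => (piecewise_eq_of_mem _ _ _ hv).symm, ?_⟩,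
      fun v hv => piecewise_eq_of_notMem _ _ _ hv⟩
    rw [hgg', hKf, quotientBy_quotientBy, quotientBy_congr hH fun v hv => ?_]
    exact (piecewise_eq_of_mem _ _ _ hv).symm
  · intro f hf
    funext v
    by_cases hv : v ∈ H.verts
    · simp only [piecewise_eq_of_mem _ _ _ hv, Function.comp_apply]
      exact hg.leftInvOn_invFunOn (apply_mem_of_mem_isoFinset hf hv)
    · simp only [piecewise_eq_of_notMem _ _ _ hv, (mem_isoFinset.mp hf).2 v hv]
  · intro f hf
    funext v
    by_cases hv : v ∈ H.verts
    · simp only [piecewise_eq_of_mem _ _ _ hv, Function.comp_apply]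
      obtain ⟨u, hu, hgu⟩ := mem_image.mp (apply_mem_of_mem_isoFinset hf hv)
      exact Function.invFunOn_eq ⟨u, hu, hgu⟩
    · simp only [piecewise_eq_of_notMem _ _ _ hv, (mem_isoFinset.mp hf).2 v hv]

def subFinset (G H : NatHypergraph) : Finset (Finset ℕ × Finset (Finset ℕ)) :=
  {p ∈ G.verts.powerset ×ˢ G.edges.powerset | (∀ e ∈ p.2, e ⊆ p.1) ∧ Isomorphic H ⟨p.1, p.2⟩}

theorem subCount_eq_card (G H : NatHypergraph) : subCount G H = #(subFinset G H) := by
  rw [subCount, ← Set.ncard_coe_finset]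
  congr 1
  ext p
  simp only [Set.mem_ofPred_eq, subFinset, coe_filter, mem_product, mem_powerset]
  exact ⟨fun h => ⟨⟨h.1, fun e he => (h.2.1 e he).1⟩, fun e he => (h.2.1 e he).2, h.2.2⟩,
    fun h => ⟨h.1.1, fun e he => ⟨h.1.2 he, h.2.1 e he⟩, h.2.2⟩⟩

theorem filter_homFinset_eq_isoFinset {G H K : NatHypergraph} (hV : K.verts ⊆ G.verts)
    (hE : K.edges ⊆ G.edges) :
    {f ∈ homFinset G H | Set.InjOn f H.verts ∧ K = quotientBy H f} = isoFinset H K fun _ => 0 := by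
  ext f
  simp only [mem_filter, mem_homFinset, mem_isoFinset]
  refine ⟨fun h => ⟨h.2, h.1.2⟩, fun ⟨⟨hinj, hK⟩, h0⟩ => ⟨⟨⟨fun v hv => hV ?_, fun e he => hE ?_⟩,
    h0⟩, hinj, hK⟩⟩
  · rw [hK]
    exact mem_image_of_mem f hv
  · rw [hK]
    exact mem_image_of_mem _ he

theorem card_injOn_homFinset {H : NatHypergraph} (hH : H.Good) (G : NatHypergraph) :
    #{f ∈ homFinset G H | Set.InjOn f H.verts} = subCount G H * autCount H := by
  set toPair : (ℕ → ℕ) → Finset ℕ × Finset (Finset ℕ) :=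
    fun f => ((quotientBy H f).verts, (quotientBy H f).edges)
  have hmaps : ∀ f ∈ {f ∈ homFinset G H | Set.InjOn f H.verts}, toPair f ∈ subFinset G H := by
    intro f hf
    simp only [mem_filter, mem_homFinset] at hf
    obtain ⟨⟨⟨hV, hE⟩, -⟩, hinj⟩ := hf
    simp only [toPair, subFinset, quotientBy, mem_filter, mem_product, mem_powerset]
    refine ⟨⟨fun w hw => ?_, fun e' he' => ?_⟩, fun e' he' => ?_,
      isomorphic_iff_exists_quotientBy.mpr ⟨f, hinj, rfl⟩⟩
    · obtain ⟨v, hv, rfl⟩ := mem_image.mp hw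
      exact hV v hv
    · obtain ⟨e, he, rfl⟩ := mem_image.mp he'
      exact hE e he
    · obtain ⟨e, he, rfl⟩ := mem_image.mp he'
      exact image_subset_image (hH e he).1
  have hfiber : ∀ p ∈ subFinset G H,
      {f ∈ {f ∈ homFinset G H | Set.InjOn f H.verts} | toPair f = p} =
        isoFinset H ⟨p.1, p.2⟩ fun _ => 0 := by
    intro p hp
    simp only [subFinset, mem_filter, mem_product, mem_powerset] at hp
    rw [filter_filter, ← filter_homFinset_eq_isoFinset (K := ⟨p.1, p.2⟩) hp.1.1 hp.1.2]
    refine filter_congr fun f _ => and_congr_right fun _ => ?_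
    simp only [toPair, quotientBy, NatHypergraph.mk.injEq, Prod.ext_iff, eq_comm]
  rw [subCount_eq_card, autCount_eq_card, card_eq_sum_card_fiberwise hmaps]
  refine sum_const_nat fun p hp => ?_
  rw [hfiber p hp]
  exact (card_isoFinset_congr hH hH (mem_filter.mp hp).2.2 _ _).symm

theorem subCount_eq_sum_pointerMaps {H : NatHypergraph} (hH : H.Good) (G : NatHypergraph) :
    (subCount G H : ℚ) = (∑ c ∈ pointerMaps H.verts, (-1) ^ #{v ∈ H.verts | c v ≠ v} *
      (homCount G (quotientBy H (pointerRoot c)) : ℚ)) / autCount H := by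
  rw [← card_injOn_homFinset_eq_sum hH, card_injOn_homFinset hH, Nat.cast_mul,
    mul_div_cancel_right₀ _ (Nat.cast_ne_zero.mpr (autCount_pos H).ne')]

def subCoeff (H X : NatHypergraph) : ℚ :=
  (∑ c ∈ pointerMaps H.verts with Isomorphic (quotientBy H (pointerRoot c)) X,
    (-1) ^ #{v ∈ H.verts | c v ≠ v}) / autCount H

theorem subCoeff_ne_zero {H X : NatHypergraph} {c₀ : ℕ → ℕ} (hc₀ : c₀ ∈ pointerMaps H.verts)
    (hX : Isomorphic (quotientBy H (pointerRoot c₀)) X) : subCoeff H X ≠ 0 := by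
  have hsign : ∀ c ∈ {c ∈ pointerMaps H.verts | Isomorphic (quotientBy H (pointerRoot c)) X},
      ((-1) ^ #{v ∈ H.verts | c v ≠ v} : ℚ) = (-1) ^ (#H.verts - #X.verts) := by
    intro c hc
    obtain ⟨hc, hcX⟩ := mem_filter.mp hc
    have hcard := card_moved_add_card_image_pointerRoot hc
    rw [← hcX.card_verts_eq]
    exact congrArg _ (by simp only [quotientBy]; omega)
  rw [subCoeff, sum_congr rfl hsign, sum_const, nsmul_eq_mul]
  refine div_ne_zero (mul_ne_zero ?_ (pow_ne_zero _ (by norm_num)))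
    (Nat.cast_ne_zero.mpr (autCount_pos H).ne')
  exact Nat.cast_ne_zero.mpr (card_ne_zero_of_mem (mem_filter.mpr ⟨hc₀, hX⟩))

theorem sum_pointerMaps_eq_sum_subCoeff {H : NatHypergraph} (hH : H.Good) (G : NatHypergraph)
    {Q : Finset NatHypergraph}
    (hQ : ∀ c ∈ pointerMaps H.verts, ∃! X, X ∈ Q ∧ Isomorphic (quotientBy H (pointerRoot c)) X) :
    (∑ c ∈ pointerMaps H.verts, (-1) ^ #{v ∈ H.verts | c v ≠ v} *
      (homCount G (quotientBy H (pointerRoot c)) : ℚ)) / autCount H =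
        ∑ X ∈ Q, subCoeff H X * homCount G X := by
  simp only [subCoeff, div_mul_eq_mul_div, ← sum_div, sum_mul, sum_filter, ite_mul, zero_mul]
  congr 1
  rw [sum_comm]
  refine sum_congr rfl fun c hc => ?_
  obtain ⟨X, ⟨hXQ, hcX⟩, hX⟩ := hQ c hc
  rw [sum_eq_single_of_mem X hXQ fun Y hYQ hYX => if_neg fun hcY => hYX (hX Y ⟨hYQ, hcY⟩),
    if_pos hcX, hcX.homCount_eq (hH.quotientBy _) G]

theorem stmt19 (H : NatHypergraph) (hH : H.Good) :
    ∃ Q : Finset NatHypergraph,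
      (∀ H' ∈ Q, IsQuotient H H') ∧
      (∀ H', IsQuotient H H' → ∃ H'' ∈ Q, Isomorphic H' H'') ∧
      (∀ H' ∈ Q, ∀ H'' ∈ Q, H' ≠ H'' → ¬ Isomorphic H' H'') ∧
      ∃ γ : NatHypergraph → ℚ, (∀ H' ∈ Q, γ H' ≠ 0) ∧
        ∀ G : NatHypergraph, G.Good →
          (subCount G H : ℚ) = ∑ H' ∈ Q, γ H' * (homCount G H' : ℚ) := by
  set S := (pointerMaps H.verts).image fun c => quotientBy H (pointerRoot c)
  have hS : ∀ X ∈ S, X.Good := fun X hX => by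
    obtain ⟨c, -, rfl⟩ := mem_image.mp hX
    exact hH.quotientBy _
  obtain ⟨Q, hQS, hQ⟩ := S.exists_transversal Isomorphic (fun X _ => .refl X)
    (fun X hX _ _ => Isomorphic.symm (hS X hX)) fun _ _ _ _ _ _ => Isomorphic.trans
  have hrep : ∀ c ∈ pointerMaps H.verts,
      ∃! X, X ∈ Q ∧ Isomorphic (quotientBy H (pointerRoot c)) X :=
    fun c hc => hQ _ (mem_image_of_mem _ hc)
  refine ⟨Q, fun X hX => ?_, fun X ⟨f, hf⟩ => ?_, fun X hX Y hY hXY hiso => ?_, subCoeff H,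
    fun X hX => ?_, fun G _ => ?_⟩
  · obtain ⟨c, -, rfl⟩ := mem_image.mp (hQS hX)
    exact ⟨_, rfl⟩
  · obtain ⟨c, hc, hcf⟩ := exists_pointerMaps_pointerRoot_eq_iff H.verts f
    obtain ⟨Y, ⟨hYQ, hcY⟩, -⟩ := hrep c hc
    refine ⟨Y, hYQ, hf ▸ (isomorphic_quotientBy_of_fibers hH fun u hu v hv => ?_).trans hcY⟩
    exact (hcf u hu v hv).symm
  · obtain ⟨Z, -, hZ⟩ := hQ X (hQS hX)
    exact hXY ((hZ X ⟨hX, .refl X⟩).trans (hZ Y ⟨hY, hiso⟩).symm)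
  · obtain ⟨c, hc, rfl⟩ := mem_image.mp (hQS hX)
    exact subCoeff_ne_zero hc (.refl _)
  · rw [subCount_eq_sum_pointerMaps hH, sum_pointerMaps_eq_sum_subCoeff hH G hrep]

end
end
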